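/- arXiv:1407.6958 — 2 statements merged into one kernel-verified Lean document; each statement's English description precedes it below -/
import Mathlib

section
/- Let G be a connected undirected multigraph and x a non-terminating chip-distribution on G. Then |x| ≥ |E(G)|. -/
/- Common definitions for chip-firing on multigraphs/digraphs.

A digraph (without a fixed vertex enumeration) on a finite vertex type `V`
is given by its arc-multiplicity function `a : V → V → ℕ` (`a u v` = number
of arcs from `u` to `v`).  An undirected multigraph is the special case of a
symmetric multiplicity function `d` (`d u v` = number of edges between `u`
and `v`); then `outDeg d v = ∑ u, d v u` is the degree of `v`, and
`∑ v, ∑ u, d v u = 2 |E|`. -/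

variable {V : Type*} [Fintype V] [DecidableEq V]

/-- Outdegree of `v` (= degree in the undirected, i.e. symmetric, case). -/
def outDeg (a : V → V → ℕ) (v : V) : ℕ := ∑ u, a v u

/-- Indegree of `v`. -/
def inDeg (a : V → V → ℕ) (v : V) : ℕ := ∑ u, a u v

/-- The distribution obtained from `x` by firing the vertex `v`:
`v` loses `outDeg a v` chips and each `u` receives `a v u` chips. -/
def fire (a : V → V → ℕ) (x : V → ℕ) (v : V) : V → ℕ :=
  fun u => x u + a v u - (if u = v then outDeg a v else 0)

/-- The distribution obtained from `x` after firing the vertices in the list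
`l`, in order. -/
def run (a : V → V → ℕ) (x : V → ℕ) : List V → (V → ℕ)
  | [] => x
  | v :: l => run a (fire a x v) l

/-- The sequence of firings `l` starting from the distribution `x` is a legal
game: each fired vertex is active (has at least `outDeg` many chips) when it
is fired. -/
def LegalGame (a : V → V → ℕ) : (V → ℕ) → List V → Prop
  | _, [] => True
  | x, v :: l => outDeg a v ≤ x v ∧ LegalGame a (fire a x v) l

/-- `x` is non-terminating: after any legal game from `x` there is still an
active vertex, so every legal game can be continued indefinitely. -/
def Nonterminating (a : V → V → ℕ) (x : V → ℕ) : Prop :=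
  ∀ l : List V, LegalGame a x l → ∃ v, outDeg a v ≤ run a x l v

/-- `x` is terminating: some legal game from `x` reaches a distribution with
no active vertex. -/
def Terminates (a : V → V → ℕ) (x : V → ℕ) : Prop :=
  ∃ l : List V, LegalGame a x l ∧ ∀ v, run a x l v < outDeg a v

/-- No loops. -/
def Loopless (a : V → V → ℕ) : Prop := ∀ v, a v v = 0

/-- Connectivity of an undirected multigraph `d`. -/
def UConnected (d : V → V → ℕ) : Prop :=
  ∀ u v : V, Relation.ReflTransGen (fun p q => 0 < d p q) u v

/-- Weak connectivity of a digraph `a`. -/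
def WConnected (a : V → V → ℕ) : Prop :=
  ∀ u v : V, Relation.ReflTransGen (fun p q => 0 < a p q ∨ 0 < a q p) u v

/-- A digraph is acyclic if it has no directed cycle. -/
def AcyclicDigraph (a : V → V → ℕ) : Prop :=
  ∀ v : V, ¬ Relation.TransGen (fun p q => 0 < a p q) v v

/-- `a` is an orientation of the undirected multigraph `d`. -/
def IsOrientation (d a : V → V → ℕ) : Prop := ∀ u v, a u v + a v u = d u v

/-- A digraph is Eulerian if `d⁺(v) = d⁻(v)` for every vertex. -/
def EulerianD (a : V → V → ℕ) : Prop := ∀ v, outDeg a v = inDeg a v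

/-- `f` is a feedback arc set of the digraph `a`: a subset of the arcs whose
removal leaves an acyclic digraph. -/
def IsFAS (a f : V → V → ℕ) : Prop :=
  (∀ u v, f u v ≤ a u v) ∧ AcyclicDigraph (fun u v => a u v - f u v)

/-- Number of arcs in an arc set. -/
def arcSize (f : V → V → ℕ) : ℕ := ∑ u, ∑ v, f u v

/-- Degree of a divisor. -/
def divDeg (f : V → ℤ) : ℤ := ∑ v, f v

/-- Effective divisor. -/
def Effective (f : V → ℤ) : Prop := ∀ v, 0 ≤ f v

/-- Linear equivalence of divisors on the multigraph `d`: they differ by an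
integer combination of the columns of the Laplacian. -/
def LinEquiv (d : V → V → ℕ) (f g : V → ℤ) : Prop :=
  ∃ z : V → ℤ, ∀ v, g v = f v + ∑ u, (d v u : ℤ) * (z u - z v)

/-- `r` is the Baker–Norine rank of the divisor `f` on the multigraph `d`. -/
def IsRank (d : V → V → ℕ) (f : V → ℤ) (r : ℤ) : Prop :=
  IsLeast {m : ℤ | ∃ g : V → ℤ, Effective g ∧
    (¬ ∃ h : V → ℤ, Effective h ∧ LinEquiv d (fun v => f v - g v) h) ∧
    m = divDeg g - 1} r

/-!
Along an infinite legal game the number of chips is conserved, so no vertex can keep receiving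
chips without firing; by connectivity every vertex therefore fires infinitely often. Once every
vertex has fired, orient each edge towards the endpoint whose last firing came earlier: each arc
into `v` comes from a vertex that fired after `v` did for the last time, so `v` holds at least its
indegree in chips, and the indegrees add up to `|E|`.
-/

open Finset Filter

section Orientation

variable {ι α : Type*}

def orientBy [LinearOrder α] (d : ι → ι → ℕ) (t : ι → α) : ι → ι → ℕ :=
  fun u v => if t v < t u then d u v else 0

theorem isOrientation_orientBy [LinearOrder α] {d : ι → ι → ℕ} (hsym : ∀ u v, d u v = d v u)
    (hloop : Loopless d) {t : ι → α} (ht : Function.Injective t) :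
    IsOrientation d (orientBy d t) := by
  intro u v
  rcases lt_trichotomy (t u) (t v) with h | h | h
  · simp [orientBy, h, h.not_gt, hsym v u]
  · simp [ht h, hloop v, orientBy]
  · simp [orientBy, h, h.not_gt]

theorem sum_sum_eq_two_mul_sum_inDeg [Fintype ι] {d D : ι → ι → ℕ} (hD : IsOrientation d D) :
    ∑ v, ∑ u, d v u = 2 * ∑ v, inDeg D v := by
  have hD' : ∀ v u, d v u = D v u + D u v := fun v u => (hD v u).symm
  simp only [hD', sum_add_distrib, inDeg]
  rw [sum_comm (f := fun v u => D u v)]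
  ring

end Orientation

section LastFire

variable {V : Type*} [DecidableEq V] (s : ℕ → V)

/-- Junk value `0` if `v` does not fire among `s 0, …, s n`. -/
def lastFire (n : ℕ) (v : V) : ℕ := Nat.findGreatest (fun k => s k = v) n

variable {s} in
theorem lastFire_injective {n : ℕ} (h : ∀ v, ∃ k ≤ n, s k = v) :
    Function.Injective (lastFire s n) := by
  intro u v huv
  obtain ⟨k, hk, hku⟩ := h u
  obtain ⟨l, hl, hlv⟩ := h v
  calc u = s (lastFire s n u) := (Nat.findGreatest_spec (P := (s · = u)) hk hku).symm
    _ = s (lastFire s n v) := congrArg s huv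
    _ = v := Nat.findGreatest_spec (P := (s · = v)) hl hlv

end LastFire

section ChipFiring

variable {V : Type*} [Fintype V] [DecidableEq V] {a : V → V → ℕ} {x : V → ℕ}

theorem fire_apply_of_ne {u v : V} (h : u ≠ v) : fire a x v u = x u + a v u := by
  simp [fire, h]

theorem sum_fire {v : V} (hv : outDeg a v ≤ x v) : ∑ u, fire a x v u = ∑ u, x u := by
  have hle : ∀ u ∈ univ, (if u = v then outDeg a v else 0) ≤ x u + a v u := by
    intro u _
    split_ifs with h
    · subst h
      exact hv.trans (Nat.le_add_right _ _)
    · exact Nat.zero_le _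
  simp only [fire]
  rw [sum_tsub_distrib _ hle, sum_ite_eq' univ v, if_pos (mem_univ v), sum_add_distrib]
  exact Nat.add_sub_cancel _ _

theorem run_append (x : V → ℕ) (l l' : List V) : run a x (l ++ l') = run a (run a x l) l' := by
  induction l generalizing x with
  | nil => rfl
  | cons v l ih => exact ih _

theorem legalGame_append {l l' : List V} :
    LegalGame a x (l ++ l') ↔ LegalGame a x l ∧ LegalGame a (run a x l) l' := by
  induction l generalizing x with
  | nil => simp [LegalGame, run]
  | cons v l ih => simp [LegalGame, run, ih, and_assoc]

variable (a x) in
def runSeq (s : ℕ → V) (n : ℕ) : V → ℕ := run a x ((List.range n).map s)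

variable {s : ℕ → V}

theorem runSeq_succ (n : ℕ) : runSeq a x s (n + 1) = fire a (runSeq a x s n) (s n) := by
  simp [runSeq, List.range_succ, run_append, run]

theorem runSeq_eq_add_sum_Ico {v : V} {k n : ℕ} (hkn : k ≤ n) (hv : ∀ i ∈ Ico k n, s i ≠ v) :
    runSeq a x s n v = runSeq a x s k v + ∑ i ∈ Ico k n, a (s i) v := by
  induction n, hkn using Nat.le_induction with
  | base => simp
  | succ n hkn ih =>
    have hsn : v ≠ s n := (hv n (by simp [hkn])).symm
    rw [runSeq_succ, fire_apply_of_ne hsn, ih fun i hi => hv i (Ico_subset_Ico_right n.le_succ hi),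
      sum_Ico_succ_top hkn, add_assoc]

variable (a x s) in
def IsLegalSeq : Prop := ∀ n, outDeg a (s n) ≤ runSeq a x s n (s n)

theorem Nonterminating.exists_isLegalSeq (hx : Nonterminating a x) : ∃ s, IsLegalSeq a x s := by
  obtain ⟨v₀, -⟩ := hx [] trivial
  have : Nonempty V := ⟨v₀⟩
  let next : List V → V := fun l => Classical.epsilon fun v => outDeg a v ≤ run a x l v
  let game : ℕ → List V := fun n => Nat.rec [] (fun _ l => l ++ [next l]) n
  have hgame : ∀ n, game n = (List.range n).map (fun k => next (game k)) := by
    intro n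
    induction n with
    | zero => rfl
    | succ n ih =>
      change game n ++ _ = _
      rw [List.range_succ, List.map_append, ← ih]
      rfl
  have hlegal : ∀ n, LegalGame a x (game n) := by
    intro n
    induction n with
    | zero => trivial
    | succ n ih =>
      exact legalGame_append.2 ⟨ih, Classical.epsilon_spec (hx _ ih), trivial⟩
  refine ⟨fun n => next (game n), fun n => ?_⟩
  rw [runSeq, ← hgame]
  exact Classical.epsilon_spec (hx _ (hlegal n))

namespace IsLegalSeq

variable (hs : IsLegalSeq a x s)
include hs

theorem sum_runSeq (n : ℕ) : ∑ v, runSeq a x s n v = ∑ v, x v := by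
  induction n with
  | zero => rfl
  | succ n ih => rw [runSeq_succ, sum_fire (hs n), ih]

theorem runSeq_le_sum (n : ℕ) (v : V) : runSeq a x s n v ≤ ∑ u, x u :=
  hs.sum_runSeq n ▸ single_le_sum (fun _ _ => Nat.zero_le _) (mem_univ v)

/-- If `u` stopped firing while its in-neighbour `w` keeps firing, chips would pile up on `u`
beyond the (conserved) total. -/
theorem frequently_eq_of_adj {w u : V} (hw : ∃ᶠ n in atTop, s n = w) (hwu : 0 < a w u) :
    ∃ᶠ n in atTop, s n = u := by
  intro hu
  obtain ⟨k, hk⟩ := eventually_atTop.1 hu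
  have hgrow : ∀ K, ∃ n, k ≤ n ∧ K ≤ ∑ i ∈ Ico k n, a (s i) u := by
    intro K
    induction K with
    | zero => exact ⟨k, le_rfl, Nat.zero_le _⟩
    | succ K ih =>
      obtain ⟨n, hkn, hK⟩ := ih
      obtain ⟨m, hm, hsm⟩ := frequently_atTop.1 hw n
      refine ⟨m + 1, by omega, ?_⟩
      rw [sum_Ico_succ_top (hkn.trans hm), hsm]
      have := sum_le_sum_of_subset (f := fun i => a (s i) u)
        (Ico_subset_Ico_right hm : Ico k n ⊆ Ico k m)
      omega
  obtain ⟨n, hkn, hn⟩ := hgrow (∑ v, x v + 1)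
  have := hs.runSeq_le_sum n u
  rw [runSeq_eq_add_sum_Ico hkn fun i hi => hk i (mem_Ico.1 hi).1] at this
  omega

theorem frequently_eq (hconn : UConnected a) (v : V) : ∃ᶠ n in atTop, s n = v := by
  obtain ⟨w, hinf⟩ := Finite.exists_infinite_fiber s
  have hw : ∃ᶠ n in atTop, s n = w :=
    Nat.frequently_atTop_iff_infinite.2 (Set.infinite_coe_iff.1 hinf)
  induction hconn w v with
  | refl => exact hw
  | tail _ hpq ih => exact hs.frequently_eq_of_adj ih hpq

end IsLegalSeq

/-- An arc `u → v` of the orientation means that `u` fires after the last firing of `v`, sending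
`a u v` chips that `v` keeps. -/
theorem inDeg_orientBy_lastFire_le_runSeq (n : ℕ) (v : V) :
    inDeg (orientBy a (lastFire s n)) v ≤ runSeq a x s (n + 1) v := by
  set t := lastFire s n
  have hlater : ∀ u, t v < t u → s (t u) = u := fun u h =>
    Nat.findGreatest_of_ne_zero rfl (Nat.ne_zero_of_lt h)
  have htle : ∀ u, t u ≤ n := fun u => Nat.findGreatest_le n
  have hquiet : ∀ i ∈ Ico (t v + 1) (n + 1), s i ≠ v := fun i hi => by
    rw [mem_Ico] at hi
    exact Nat.findGreatest_is_greatest (show t v < i by omega) (by omega)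
  calc inDeg (orientBy a t) v = ∑ u with t v < t u, a u v := by
        simp only [inDeg, orientBy, sum_filter]
    _ = ∑ i ∈ (univ.filter fun u => t v < t u).image t, a (s i) v := by
        rw [sum_image fun u hu w hw h => by
          rw [← hlater u (mem_filter.1 hu).2, ← hlater w (mem_filter.1 hw).2, h]]
        exact sum_congr rfl fun u hu => by rw [hlater u (mem_filter.1 hu).2]
    _ ≤ ∑ i ∈ Ico (t v + 1) (n + 1), a (s i) v := by
        refine sum_le_sum_of_subset fun i hi => ?_
        obtain ⟨u, hu, rfl⟩ := mem_image.1 hi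
        have := htle u
        simp only [mem_filter, mem_univ, true_and, mem_Ico] at hu ⊢
        omega
    _ ≤ runSeq a x s (n + 1) v := by
        rw [runSeq_eq_add_sum_Ico (Nat.succ_le_succ (htle v)) hquiet]
        exact Nat.le_add_left _ _

end ChipFiring

/-- a non-terminating distribution on a connected multigraph has at
least `|E(G)|` chips, i.e. `2|x| ≥ 2|E| = ∑_v ∑_u d v u`. -/
theorem stmt5 {V : Type*} [Fintype V] [DecidableEq V]
    (d : V → V → ℕ) (hsym : ∀ u v, d u v = d v u) (hloop : Loopless d)
    (hconn : UConnected d) (x : V → ℕ) (hx : Nonterminating d x) :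
    ∑ v, ∑ u, d v u ≤ 2 * ∑ v, x v := by
  obtain ⟨s, hs⟩ := hx.exists_isLegalSeq
  choose k hk using fun v => (hs.frequently_eq hconn v).exists
  set n := univ.sup k
  have hfired : ∀ v, ∃ i ≤ n, s i = v := fun v => ⟨k v, le_sup (mem_univ v), hk v⟩
  calc ∑ v, ∑ u, d v u = 2 * ∑ v, inDeg (orientBy d (lastFire s n)) v :=
        sum_sum_eq_two_mul_sum_inDeg (isOrientation_orientBy hsym hloop (lastFire_injective hfired))
    _ ≤ 2 * ∑ v, runSeq d x s (n + 1) v :=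
        Nat.mul_le_mul_left 2 (sum_le_sum fun v _ => inDeg_orientBy_lastFire_le_runSeq n v)
    _ = 2 * ∑ v, x v := by rw [hs.sum_runSeq]
end

section
/- Let G be a connected graph and f a divisor on G with f(v) ≤ d(v) - 1 for every vertex v. Let x = K⁺ - f be its dual chip-distribution, where K⁺(v) = d(v) - 1. Then rank(f) = dist(x) - 1, where dist(x) is the minimum number of chips to add to x to obtain a non-terminating distribution. -/
/- Common definitions for chip-firing on multigraphs/digraphs.

A digraph (without a fixed vertex enumeration) on a finite vertex type `V`
is given by its arc-multiplicity function `a : V → V → ℕ` (`a u v` = number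
of arcs from `u` to `v`).  An undirected multigraph is the special case of a
symmetric multiplicity function `d` (`d u v` = number of edges between `u`
and `v`); then `outDeg d v = ∑ u, d v u` is the degree of `v`, and
`∑ v, ∑ u, d v u = 2 |E|`. -/

variable {V : Type*} [Fintype V] [DecidableEq V]

/-!
Firing the vertices of a legal game `l` changes a distribution `w` by the Laplacian applied to the
firing vector `count l`; conversely, if firing some nonnegative vector `z` would leave a stable
configuration, then greedily firing active vertices terminates, since an active vertex always has
`z v ≥ 1`. For symmetric `d` this gives the Baker–Norine duality: `w` terminates iff `K⁺ - w` is
equivalent to an effective divisor. Applied to `w = x + y`, where `K⁺ - (x + y) = f - y`, the set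
defining `dist x` and the set defining `rank f` correspond under `y ↦ y`, and the theorem follows.
-/

open Finset

/-- The integer configuration obtained from `w` by firing each vertex `u` exactly `z u` times. -/
def fireBy (a : V → V → ℕ) (w z : V → ℕ) (v : V) : ℤ :=
  w v + ∑ u, (a u v : ℤ) * z u - outDeg a v * z v

lemma natCast_fire (a : V → V → ℕ) {w : V → ℕ} {v : V} (hv : outDeg a v ≤ w v) (u : V) :
    (fire a w v u : ℤ) = w u + a v u - if u = v then (outDeg a v : ℤ) else 0 := by
  unfold fire
  split_ifs with h
  · subst h; push_cast [Nat.cast_sub (hv.trans (Nat.le_add_right _ _))]; ring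
  · simp

lemma fireBy_fire (a : V → V → ℕ) {w : V → ℕ} {v : V} (hv : outDeg a v ≤ w v) (z : V → ℕ) :
    fireBy a (fire a w v) z = fireBy a w (z + Pi.single v 1) := by
  funext u
  simp only [fireBy, natCast_fire a hv, Pi.add_apply, Pi.single_apply, Nat.cast_add,
    Nat.cast_ite, Nat.cast_one, Nat.cast_zero, mul_add, mul_ite, mul_one, mul_zero,
    sum_add_distrib, sum_ite_eq', mem_univ, if_true]
  split_ifs with h
  · subst h; ring
  · ring

lemma natCast_run (a : V → V → ℕ) {w : V → ℕ} {l : List V} (hl : LegalGame a w l) (v : V) :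
    (run a w l v : ℤ) = fireBy a w (fun u => l.count u) v := by
  induction l generalizing w with
  | nil => simp [run, fireBy]
  | cons v₀ l ih =>
    obtain ⟨hv₀, hl⟩ := hl
    have hcount : (fun u => (v₀ :: l).count u) = (fun u => l.count u) + Pi.single v₀ 1 := by
      funext u
      rcases eq_or_ne u v₀ with rfl | h
      · simp
      · simp [h, Ne.symm h]
    rw [run, ih hl, fireBy_fire a hv₀, hcount]

lemma terminates_of_fireBy_lt (a : V → V → ℕ) {w z : V → ℕ}
    (hz : ∀ v, fireBy a w z v < outDeg a v) : Terminates a w := by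
  induction hk : ∑ v, z v generalizing w z with
  | zero =>
    have hz0 : z = 0 := funext fun v => sum_eq_zero_iff.mp hk v (mem_univ v)
    subst hz0
    exact ⟨[], trivial, fun v => by simpa [run, fireBy] using hz v⟩
  | succ k ih =>
    by_cases hstable : ∀ v, w v < outDeg a v
    · exact ⟨[], trivial, hstable⟩
    obtain ⟨v, hv⟩ := not_forall_not.mp fun h => hstable fun v => not_le.mp (h v)
    have hzv : 1 ≤ z v := by
      by_contra! h0
      have hin : (0 : ℤ) ≤ ∑ u, (a u v : ℤ) * z u := sum_nonneg fun u _ => by positivity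
      have := hz v
      simp only [fireBy, Nat.lt_one_iff.mp h0, Nat.cast_zero, mul_zero, sub_zero] at this
      omega
    set z' : V → ℕ := z - Pi.single v 1
    have hsplit : z = z' + Pi.single v 1 := by
      funext u; by_cases h : u = v <;> simp [z', h]; omega
    have hsum : ∑ u, z' u = k := by
      rw [hsplit] at hk
      simp only [Pi.add_apply, sum_add_distrib] at hk
      simpa using hk
    obtain ⟨l, hl, hend⟩ := ih (w := fire a w v)
      (by rwa [fireBy_fire a hv, ← hsplit]) hsum
    exact ⟨v :: l, ⟨hv, hl⟩, hend⟩

lemma nonterminating_iff_not_terminates (a : V → V → ℕ) (w : V → ℕ) :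
    Nonterminating a w ↔ ¬ Terminates a w := by
  simp only [Nonterminating, Terminates, not_exists, not_and, not_forall, not_lt]

section Symmetric

variable {d : V → V → ℕ}

lemma terminates_iff_exists_effective_linEquiv (hsym : ∀ u v, d u v = d v u) (w : V → ℕ) :
    Terminates d w ↔
      ∃ h, Effective h ∧ LinEquiv d (fun v => (outDeg d v : ℤ) - 1 - w v) h := by
  have fireBy_eq_add_laplacian (z : V → ℕ) (v : V) :
      fireBy d w z v = w v + ∑ u, (d v u : ℤ) * (z u - z v) := by
    have hdeg : (outDeg d v : ℤ) = ∑ u, (d v u : ℤ) := by simp [outDeg]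
    simp only [fireBy, hdeg, mul_sub, sum_sub_distrib, ← sum_mul, hsym _ v]
    ring
  constructor
  · rintro ⟨l, hl, hstable⟩
    refine ⟨fun v => (outDeg d v : ℤ) - 1 - run d w l v, fun v => by linarith [hstable v],
      fun u => -(l.count u), fun v => ?_⟩
    dsimp only
    rw [natCast_run d hl, fireBy_eq_add_laplacian]
    simp only [neg_sub_neg, mul_sub, sum_sub_distrib]
    ring
  · rintro ⟨h, heff, z, hz⟩
    cases isEmpty_or_nonempty V
    · exact ⟨[], trivial, isEmptyElim⟩
    obtain ⟨v₀, -, hmax⟩ := exists_max_image univ z univ_nonempty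
    have hζ : ∀ u, ((z v₀ - z u).toNat : ℤ) = z v₀ - z u :=
      fun u => Int.toNat_of_nonneg (sub_nonneg.mpr (hmax u (mem_univ u)))
    refine terminates_of_fireBy_lt d (z := fun u => (z v₀ - z u).toNat) fun v => ?_
    have hdual := hz v
    rw [fireBy_eq_add_laplacian]
    simp only [hζ, sub_sub_sub_cancel_left, mul_sub, sum_sub_distrib] at hdual ⊢
    linarith [heff v]

lemma nonterminating_add_iff (hsym : ∀ u v, d u v = d v u) {f : V → ℤ} {x : V → ℕ}
    (hx : ∀ v, (x v : ℤ) = (outDeg d v : ℤ) - 1 - f v) (y : V → ℕ) :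
    Nonterminating d (fun v => x v + y v) ↔
      ¬ ∃ h, Effective h ∧ LinEquiv d (fun v => f v - y v) h := by
  rw [nonterminating_iff_not_terminates, terminates_iff_exists_effective_linEquiv hsym]
  have hdual : (fun v => (outDeg d v : ℤ) - 1 - ((x v + y v : ℕ) : ℤ)) = fun v => f v - y v := by
    funext v; push_cast; rw [hx]; ring
  rw [hdual]

end Symmetric

theorem stmt15_general {V : Type*} [Fintype V] [DecidableEq V]
    (d : V → V → ℕ) (hsym : ∀ u v, d u v = d v u) (f : V → ℤ)
    (x : V → ℕ) (hx : ∀ v, (x v : ℤ) = (outDeg d v : ℤ) - 1 - f v)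
    (r : ℤ) (hr : IsRank d f r)
    (n : ℕ)
    (hn : IsLeast {m : ℕ | ∃ y : V → ℕ,
      Nonterminating d (fun v => x v + y v) ∧ ∑ v, y v = m} n) :
    r = (n : ℤ) - 1 := by
  obtain ⟨⟨y, hy, rfl⟩, hn_le⟩ := hn
  obtain ⟨⟨g, hg, hg_not, rfl⟩, hr_le⟩ := hr
  have hg_toNat : ∀ v, ((g v).toNat : ℤ) = g v := fun v => Int.toNat_of_nonneg (hg v)
  apply le_antisymm
  · exact hr_le ⟨fun v => y v, fun v => Int.natCast_nonneg _,
      (nonterminating_add_iff hsym hx y).mp hy, by simp [divDeg]⟩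
  · have hdist := hn_le ⟨fun v => (g v).toNat,
      (nonterminating_add_iff hsym hx _).mpr (by simpa only [hg_toNat] using hg_not), rfl⟩
    have hdeg : divDeg g = ((∑ v, (g v).toNat : ℕ) : ℤ) := by simp [divDeg, hg_toNat]
    rw [hdeg]
    exact_mod_cast Int.sub_le_sub_right (Nat.cast_le.mpr hdist) 1

/-- for a divisor `f` with `f(v) ≤ d(v) - 1` and its dual
chip-distribution `x = K⁺ - f`, one has `rank(f) = dist(x) - 1`. -/
theorem stmt15 {V : Type*} [Fintype V] [DecidableEq V]
    (d : V → V → ℕ) (hsym : ∀ u v, d u v = d v u) (hloop : Loopless d)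
    (hconn : UConnected d) (f : V → ℤ)
    (hf : ∀ v, f v ≤ (outDeg d v : ℤ) - 1)
    (x : V → ℕ) (hx : ∀ v, (x v : ℤ) = (outDeg d v : ℤ) - 1 - f v)
    (r : ℤ) (hr : IsRank d f r)
    (n : ℕ)
    (hn : IsLeast {m : ℕ | ∃ y : V → ℕ,
      Nonterminating d (fun v => x v + y v) ∧ ∑ v, y v = m} n) :
    r = (n : ℤ) - 1 :=
  stmt15_general d hsym f x hx r hr n hn
end
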